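/- Suppose there exists a ring isomorphism F : R ×_ω M → R ×_{ω'} M' restricting to the identity on R × {0} and mapping {0} × M onto {0} × M'. Then the induced map φ : M → M' is an R-module isomorphism satisfying ω'(φ(x), φ(y)) = ω(x, y) for all x, y ∈ M. Conversely, any R-module isomorphism φ : M → M' with ω'(φ(x), φ(y)) = ω(x, y) induces such a ring isomorphism via (a, x) ↦ (a, φ(x)). -/

import Mathlib

/-- The multiplication `(a, x) · (b, y) = (a b + ω(x, y), a • y + b • x)` on `R × M`. -/
def superMul {R M : Type*} [CommRing R] [AddCommGroup M] [Module R M]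
    (ω : M →ₗ[R] M →ₗ[R] R) (p q : R × M) : R × M :=
  (p.1 * q.1 + ω p.2 q.2, p.1 • q.2 + q.1 • p.2)

/-
Multiplication by an even element `(a, 0)` is scalar multiplication by `a`, and two odd elements
multiply into the even part, `(0, x) · (0, y) = (ω x y, 0)`. Hence a multiplicative map fixing
`R × {0}` is `R`-linear on the odd part, and if it sends `{0} × M` to `{0} × M'` it carries `ω`
to `ω'`. Conversely `id × φ` visibly respects both products.
-/

section SuperMul

variable {R M M' : Type*} [CommRing R] [AddCommGroup M] [Module R M]
  [AddCommGroup M'] [Module R M'] {ω : M →ₗ[R] M →ₗ[R] R} {ω' : M' →ₗ[R] M' →ₗ[R] R}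

@[simp]
theorem superMul_even_left (a : R) (q : R × M) : superMul ω (a, 0) q = a • q := by
  ext <;> simp [superMul]

@[simp]
theorem superMul_odd_odd (x y : M) : superMul ω (0, x) (0, y) = (ω x y, 0) := by
  simp [superMul]

theorem superMul_prodMap {φ : M →ₗ[R] M'} (hφ : ∀ x y : M, ω' (φ x) (φ y) = ω x y)
    (p q : R × M) :
    superMul ω' (Prod.map id φ p) (Prod.map id φ q) = Prod.map id φ (superMul ω p q) := by
  simp [superMul, hφ]

variable (F : R × M → R × M') (hadd : ∀ p q : R × M, F (p + q) = F p + F q)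
  (hmul : ∀ p q : R × M, F (superMul ω p q) = superMul ω' (F p) (F q))
  (hid : ∀ a : R, F (a, 0) = (a, 0))

def oddLinearMap : M →ₗ[R] M' where
  toFun x := (F (0, x)).2
  map_add' x y := by
    simpa using congrArg Prod.snd (hadd (0, x) (0, y))
  map_smul' a x := by
    have h := hmul (a, 0) (0, x)
    rw [superMul_even_left, hid, superMul_even_left, Prod.smul_mk, smul_zero] at h
    exact congrArg Prod.snd h

theorem apply_odd_eq_oddLinearMap (hfst : ∀ x : M, (F (0, x)).1 = 0) (x : M) :
    F (0, x) = (0, oddLinearMap F hadd hmul hid x) :=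
  Prod.ext (hfst x) rfl

theorem oddLinearMap_pairing (hfst : ∀ x : M, (F (0, x)).1 = 0) (x y : M) :
    ω' (oddLinearMap F hadd hmul hid x) (oddLinearMap F hadd hmul hid y) = ω x y := by
  have h := hmul (0, x) (0, y)
  rw [superMul_odd_odd, hid, apply_odd_eq_oddLinearMap F hadd hmul hid hfst x,
    apply_odd_eq_oddLinearMap F hadd hmul hid hfst y, superMul_odd_odd] at h
  exact (congrArg Prod.fst h).symm

theorem oddLinearMap_bijective (hfst : ∀ x : M, (F (0, x)).1 = 0) (hinj : Function.Injective F)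
    (hsurj : ∀ y : M', ∃ x : M, F (0, x) = (0, y)) :
    Function.Bijective (oddLinearMap F hadd hmul hid) := by
  refine ⟨fun x y hxy => ?_, fun y => ?_⟩
  · have hF : F (0, x) = F (0, y) := by
      rw [apply_odd_eq_oddLinearMap F hadd hmul hid hfst x,
        apply_odd_eq_oddLinearMap F hadd hmul hid hfst y, hxy]
    exact congrArg Prod.snd (hinj hF)
  · obtain ⟨x, hx⟩ := hsurj y
    exact ⟨x, congrArg Prod.snd hx⟩

end SuperMul

theorem stmt12_general {R M M' : Type*} [CommRing R]
    [AddCommGroup M] [Module R M] [AddCommGroup M'] [Module R M']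
    (ω : M →ₗ[R] M →ₗ[R] R) (ω' : M' →ₗ[R] M' →ₗ[R] R) :
    (∀ F : R × M → R × M',
      Function.Bijective F →
      (∀ p q : R × M, F (p + q) = F p + F q) →
      (∀ p q : R × M, F (superMul ω p q) = superMul ω' (F p) (F q)) →
      (∀ a : R, F (a, 0) = (a, 0)) →
      (∀ x : M, (F (0, x)).1 = 0) →
      (∀ y : M', ∃ x : M, F (0, x) = (0, y)) →
      ∃ φ : M ≃ₗ[R] M',
        (∀ x : M, F (0, x) = (0, φ x)) ∧
        (∀ x y : M, ω' (φ x) (φ y) = ω x y)) ∧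
    (∀ φ : M ≃ₗ[R] M', (∀ x y : M, ω' (φ x) (φ y) = ω x y) →
      let F : R × M → R × M' := fun p => (p.1, φ p.2)
      Function.Bijective F ∧
      (∀ p q : R × M, F (p + q) = F p + F q) ∧
      (∀ p q : R × M, F (superMul ω p q) = superMul ω' (F p) (F q)) ∧
      F (1, 0) = (1, 0) ∧
      (∀ a : R, F (a, 0) = (a, 0)) ∧
      (∀ y : M', ∃ x : M, F (0, x) = (0, y))) := by
  refine ⟨fun F hbij hadd hmul hid hfst hsurj => ?_, fun φ hφ => ?_⟩
  · exact ⟨.ofBijective _ (oddLinearMap_bijective F hadd hmul hid hfst hbij.1 hsurj),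
      apply_odd_eq_oddLinearMap F hadd hmul hid hfst, oddLinearMap_pairing F hadd hmul hid hfst⟩
  · exact ⟨Function.bijective_id.prodMap φ.bijective, fun p q => by simp,
      fun p q => (superMul_prodMap (φ := φ.toLinearMap) hφ p q).symm, by simp, fun a => by simp,
      fun y => ⟨φ.symm y, by simp⟩⟩

theorem stmt12 {R M M' : Type*} [CommRing R]
    [AddCommGroup M] [Module R M] [AddCommGroup M'] [Module R M']
    (ω : M →ₗ[R] M →ₗ[R] R) (ω' : M' →ₗ[R] M' →ₗ[R] R)
    (hω : ∀ x y z : M, ω x y • z = ω y z • x)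
    (hω' : ∀ x y z : M', ω' x y • z = ω' y z • x) :
    (∀ F : R × M → R × M',
      Function.Bijective F →
      (∀ p q : R × M, F (p + q) = F p + F q) →
      (∀ p q : R × M, F (superMul ω p q) = superMul ω' (F p) (F q)) →
      (∀ a : R, F (a, 0) = (a, 0)) →
      (∀ x : M, (F (0, x)).1 = 0) →
      (∀ y : M', ∃ x : M, F (0, x) = (0, y)) →
      ∃ φ : M ≃ₗ[R] M',
        (∀ x : M, F (0, x) = (0, φ x)) ∧
        (∀ x y : M, ω' (φ x) (φ y) = ω x y)) ∧
    (∀ φ : M ≃ₗ[R] M', (∀ x y : M, ω' (φ x) (φ y) = ω x y) →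
      let F : R × M → R × M' := fun p => (p.1, φ p.2)
      Function.Bijective F ∧
      (∀ p q : R × M, F (p + q) = F p + F q) ∧
      (∀ p q : R × M, F (superMul ω p q) = superMul ω' (F p) (F q)) ∧
      F (1, 0) = (1, 0) ∧
      (∀ a : R, F (a, 0) = (a, 0)) ∧
      (∀ y : M', ∃ x : M, F (0, x) = (0, y))) :=
  stmt12_general ω ω'
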